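/- Let r be a balanced two-state rotor type with period 2n. If UD(r), regarded as a periodic sequence with period length 2n, is palindromic (its k-th term equals its (2n+1−k)-th term for all 1 ≤ k ≤ 2n), then r starts and ends with the same state: r(1) = r(2n). -/

import Mathlib

open scoped Classical

/-! ### Periodic sequences and rotor types

A rotor type is modelled as a function `f : ℕ → ℕ` (0-based reindexing of the paper's
sequence `r(1), r(2), …`, so the paper's `r(k)` is `f (k-1)`), together with its minimal
period `n`.  The states of the rotor are the values occurring in one period. -/

def IsPeriodicWith {α : Type*} (f : ℕ → α) (n : ℕ) : Prop := ∀ k, f (k + n) = f k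

def IsMinimalPeriod {α : Type*} (f : ℕ → α) (n : ℕ) : Prop :=
  0 < n ∧ IsPeriodicWith f n ∧ ∀ m, 0 < m → IsPeriodicWith f m → n ≤ m

noncomputable def minPeriod {α : Type*} (f : ℕ → α) : ℕ :=
  sInf {n | 0 < n ∧ IsPeriodicWith f n}

/-- `f` (with period `n`) reads the same forwards and backwards:
`r(k) = r(n+1-k)` for `1 ≤ k ≤ n`, written 0-based. -/
def Palindromic (f : ℕ → ℕ) (n : ℕ) : Prop := ∀ k < n, f k = f (n - 1 - k)

/-- `f` (with period `n`) is block-repetitive with block length `m`. -/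
def BlockRepetitive (f : ℕ → ℕ) (n m : ℕ) : Prop :=
  2 ≤ m ∧ m ∣ n ∧ ∀ k : ℕ, ∀ j < m, f (k * m + j) = f (k * m)

def Boppy (f : ℕ → ℕ) (n : ℕ) : Prop := Palindromic f n ∨ ∃ m, BlockRepetitive f n m

/-- The set of states of a rotor type of period `n`. -/
def states (f : ℕ → ℕ) (n : ℕ) : Finset ℕ := (Finset.range n).image f

/-- Number of occurrences of the state `v` among the first `n` terms of `f`. -/
noncomputable def countIn (f : ℕ → ℕ) (n v : ℕ) : ℕ :=
  ((Finset.range n).filter (fun k => f k = v)).card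

/-- Merging reduction `s → s'`: replace every occurrence of `s` by `s'`. -/
def merge (f : ℕ → ℕ) (s s' : ℕ) : ℕ → ℕ := fun k => if f k = s then s' else f k

/-- Destructive reduction `x(s)`: delete every occurrence of `s` and re-index. -/
noncomputable def destroy (f : ℕ → ℕ) (s : ℕ) : ℕ → ℕ :=
  fun k => f (Nat.nth (fun i => f i ≠ s) k)

/-- A two-state rotor type with states `1` and `2`, both occurring. -/
def TwoState (f : ℕ → ℕ) : Prop :=
  (∀ k, f k = 1 ∨ f k = 2) ∧ (∃ k, f k = 1) ∧ (∃ k, f k = 2)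

/-! ### The compressor

The particle's trajectory alternates: at step `t` (0-based) the source `v1` fires its
`(t+1)`-st term `f t`; if it is `1`, the particle moves to `v2`, whose firing count so far
is the number of `1`'s among `f 0, …, f (t-1)`; if it is `2`, it moves to `v3` similarly.
From `v2`/`v3` the particle either returns to the source (no target hit) or hits target
`4`/`5` and restarts at the source.  `X Y : Bool` encode the variation, `true` = `U`:
at `v2` state `1` routes up to `v1` iff `X = true`; at `v3` state `1` routes up iff
`Y = true`. -/

noncomputable def hitAt (X Y : Bool) (r : ℕ → ℕ) (t : ℕ) : Option ℕ :=
  if r t = 1 then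
    (if decide (r (countIn r t 1) = 1) ≠ X then some 4 else none)
  else
    (if decide (r (countIn r t 2) = 1) ≠ Y then some 5 else none)

/-- The hitting sequence of the compressor variation `XY` on rotor type `r`:
the subsequence of recorded targets (`4` or `5`), in order. -/
noncomputable def compSeq (X Y : Bool) (r : ℕ → ℕ) : ℕ → ℕ :=
  fun k => (hitAt X Y r (Nat.nth (fun t => (hitAt X Y r t).isSome = true) k)).getD 4

noncomputable def UUseq (r : ℕ → ℕ) : ℕ → ℕ := compSeq true true r
noncomputable def UDseq (r : ℕ → ℕ) : ℕ → ℕ := compSeq true false r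
noncomputable def DUseq (r : ℕ → ℕ) : ℕ → ℕ := compSeq false true r
noncomputable def DDseq (r : ℕ → ℕ) : ℕ → ℕ := compSeq false false r

/-- The compressor output with targets `4, 5` relabelled as states `1, 2`. -/
noncomputable def compOp (X Y : Bool) (r : ℕ → ℕ) : ℕ → ℕ := fun k => compSeq X Y r k - 3

noncomputable def UUop (r : ℕ → ℕ) : ℕ → ℕ := compOp true true r
noncomputable def UDop (r : ℕ → ℕ) : ℕ → ℕ := compOp true false r
noncomputable def DUop (r : ℕ → ℕ) : ℕ → ℕ := compOp false true r
noncomputable def DDop (r : ℕ → ℕ) : ℕ → ℕ := compOp false false r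

/-- A finite composition of compressor operations (each given by its pair of letters),
with the targets relabelled back to `1, 2` after each application. -/
noncomputable def applyOps (ops : List (Bool × Bool)) (r : ℕ → ℕ) : ℕ → ℕ :=
  ops.foldl (fun s o => compOp o.1 o.2 s) r

/-- The hitting sequence of the depth-2 binary tree network `BT` on `r`
(targets `1,2,3,4`): every firing of the source produces a hit. -/
noncomputable def BTseq (r : ℕ → ℕ) : ℕ → ℕ :=
  fun t => if r t = 1 then (if r (countIn r t 1) = 1 then 1 else 2)
           else (if r (countIn r t 2) = 1 then 3 else 4)

/-- Two sequences are equivalent if one is obtained from the other by a relabelling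
that is injective on the values of the first (a bijective relabelling of states). -/
def SeqEquiv {α β : Type*} (f : ℕ → α) (g : ℕ → β) : Prop :=
  ∃ ρ : α → β, (∀ k, ρ (f k) = g k) ∧ ∀ k l, ρ (f k) = ρ (f l) → f k = f l

/-- Every aligned block of length `m` of `f` contains states `1` and `2` equally often
(`m = 2n` gives `2n`-balance). -/
def BalancedBlocks (f : ℕ → ℕ) (m : ℕ) : Prop :=
  ∀ k : ℕ, countIn (fun j => f (k * m + j)) m 1 = countIn (fun j => f (k * m + j)) m 2

/-- `f ≡_m g` : some relabelling of `f` (injective on states) has the same multiset of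
entries as `g` on every aligned block of length `m`. -/
def BlockEquiv (f g : ℕ → ℕ) (m : ℕ) : Prop :=
  ∃ ρ : ℕ → ℕ, (∀ k l, ρ (f k) = ρ (f l) ↔ f k = f l) ∧
    ∀ k : ℕ, (Multiset.range m).map (fun j => ρ (f (k * m + j))) =
             (Multiset.range m).map (fun j => g (k * m + j))

/-- `L` is a balanced run decomposition of one period (of length `p`) of `f`:
a list of positive run lengths summing to `p` such that each corresponding
consecutive run contains `1` and `2` equally often. -/
noncomputable def IsBRD (f : ℕ → ℕ) (p : ℕ) (L : List ℕ) : Prop :=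
  L.sum = p ∧ (∀ a ∈ L, 0 < a) ∧
  ∀ i : Fin L.length,
    countIn (fun j => f ((L.take i.1).sum + j)) (L.get i) 1 =
    countIn (fun j => f ((L.take i.1).sum + j)) (L.get i) 2

/-- `L` is a uniform run decomposition of one period (of length `p`) of `f`:
a list of positive run lengths summing to `p` such that each corresponding
consecutive run is constant. -/
def IsURD (f : ℕ → ℕ) (p : ℕ) (L : List ℕ) : Prop :=
  L.sum = p ∧ (∀ a ∈ L, 0 < a) ∧
  ∀ i : Fin L.length, ∀ j < L.get i, f ((L.take i.1).sum + j) = f ((L.take i.1).sum)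

/-- The maximal number of runs in a BRD of `f` (period `p`). -/
noncomputable def maxBRD (f : ℕ → ℕ) (p : ℕ) : ℕ :=
  sSup {m | ∃ L : List ℕ, IsBRD f p L ∧ L.length = m}

/-- The balance coefficient `b(f)` (with respect to period length `p`). -/
noncomputable def balCoeff (f : ℕ → ℕ) (p : ℕ) : ℚ := (maxBRD f p : ℚ) / (p : ℚ)

/-- The type of a run decomposition, as an infinite periodic sequence of run data. -/
def typeSeq (L : List ℕ) : ℕ → ℕ := fun i => L.getD (i % L.length) 0

/-- A BURD rotor: it has a BRD and a URD of the same type, i.e. the `i`-th balanced run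
has length `2·b_i` where `b_i` is the length of the `i`-th uniform run. -/
noncomputable def IsBURD (f : ℕ → ℕ) (p : ℕ) : Prop :=
  ∃ L M : List ℕ, IsBRD f p L ∧ IsURD f p M ∧ ∀ i, typeSeq L i = 2 * typeSeq M i

/-- The ba-frequency `m(f) = 2k/p` of an ab-ba sequence with period length `p`,
where `k` is the number of `21` blocks per period. -/
noncomputable def baFreq (f : ℕ → ℕ) (p : ℕ) : ℚ :=
  (2 * (((Finset.range (p / 2)).filter (fun j => f (2 * j) = 2)).card : ℚ)) / (p : ℚ)

/-! ### Rotor-router networks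

A rotor-router network on a vertex type `V`: a source, a finite set of targets
(outdegree 0), and at every non-target vertex `v` the rotor pattern, recorded by the
sequence `rotor v : ℕ → V` of heads of its successive out-edges.  The underlying digraph
has an edge `v → w` (for non-target `v`) iff `w` occurs in `v`'s rotor pattern. -/

structure RotorNetwork (V : Type) where
  source : V
  target : Finset V
  rotor : V → ℕ → V

namespace RotorNetwork

variable {V : Type} [DecidableEq V]

/-- One step of the particle dynamics on states `(current position, firing counts)`:
at a target, record it and restart at the source; at a non-target vertex `v`, fire the
next term of `v`'s rotor pattern. -/
noncomputable def step (N : RotorNetwork V) (s : V × (V → ℕ)) : V × (V → ℕ) :=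
  if s.1 ∈ N.target then (N.source, s.2)
  else (N.rotor s.1 (s.2 s.1), Function.update s.2 s.1 (s.2 s.1 + 1))

/-- The full trajectory of the particle, started at the source with all rotors fresh. -/
noncomputable def traj (N : RotorNetwork V) : ℕ → V × (V → ℕ)
  | 0 => (N.source, fun _ => 0)
  | t + 1 => N.step (N.traj t)

/-- The hitting sequence: the subsequence of targets visited, in order. -/
noncomputable def hitSeq (N : RotorNetwork V) : ℕ → V :=
  fun k => (N.traj (Nat.nth (fun t => (N.traj t).1 ∈ N.target) k)).1

/-- Adjacency of the underlying digraph. -/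
def adj (N : RotorNetwork V) (v w : V) : Prop :=
  v ∉ N.target ∧ ∃ k, N.rotor v k = w

/-- A valid rotor-router network: the source is not a target, there is at least one
target, and every non-target vertex can reach some target. -/
def Valid (N : RotorNetwork V) : Prop :=
  N.source ∉ N.target ∧ N.target.Nonempty ∧
  ∀ v : V, v ∉ N.target → ∃ t ∈ N.target, Relation.ReflTransGen N.adj v t

/-- The rotor pattern at `v` has type `r`: it is `e ∘ r` for some assignment `e` of
states to out-neighbours. -/
def HasType (N : RotorNetwork V) (v : V) (r : ℕ → ℕ) : Prop :=
  ∃ e : ℕ → V, ∀ k, N.rotor v k = e (r k)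

end RotorNetwork

/-- The alternating rotor type `1, 2, 1, 2, …` of period `2`. -/
def rot12 : ℕ → ℕ := fun k => if k % 2 = 0 then 1 else 2

/-- `r` is universal: every rotor type `r'` is, up to a bijective relabelling of states,
the hitting sequence of some finite rotor-router network all of whose rotors have type `r`. -/
noncomputable def Universal (r : ℕ → ℕ) : Prop :=
  ∀ (r' : ℕ → ℕ) (n' : ℕ), IsMinimalPeriod r' n' →
    ∃ (m : ℕ) (N : RotorNetwork (Fin m)), N.Valid ∧
      (∀ v, v ∉ N.target → N.HasType v r) ∧ SeqEquiv N.hitSeq r'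

/-- The (1-based) position of the `m`-th occurrence of the state `v` in `f`
(`posOf f 1 = f`, `posOf f 2 = g` in the paper's notation; `countIn f · 1 = F`,
`countIn f · 2 = G`). -/
noncomputable def posOf (f : ℕ → ℕ) (v m : ℕ) : ℕ := Nat.nth (fun k => f k = v) (m - 1) + 1


/-! For a two-state rotor type the UD compressor hits a target right after the `t`-th firing
of the source exactly when the vertex of state `r t` then fires the other state, and the target
is `r t + 3`. Before the first change of state nothing is hit and the first change produces a
hit, so `UD(r)` starts with `r a + 3` for some `r a ≠ r 0`. In two periods of `r` balance
produces exactly `2n` hits, the last of which is at the last firing of a state other than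
`r (2n - 1)`; so the `2n`-th term of `UD(r)` is `r b + 3` with `r b ≠ r (2n - 1)`.
Palindromicity gives `r a = r b`, and as there are only two states, `r 0 = r (2n - 1)`. -/

open Nat Function

namespace Nat

variable {p : ℕ → Prop} [DecidablePred p]

theorem count_and_comp_count (q : ℕ → Prop) [DecidablePred q] (N : ℕ) :
    count (fun t => p t ∧ q (count p t)) N = count q (count p N) := by
  induction N with
  | zero => simp
  | succ N ih => by_cases hp : p N <;> simp [count_succ, hp, ih]

theorem count_and_add_count_not_and (q : ℕ → Prop) [DecidablePred q] (N : ℕ) :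
    count (fun t => q t ∧ p t) N + count (fun t => ¬q t ∧ p t) N = count p N := by
  induction N with
  | zero => simp
  | succ N ih => by_cases hq : q N <;> by_cases hp : p N <;> simp [count_succ, hq, hp] <;> omega

theorem count_add_of_periodic {a : ℕ} (hp : Periodic p a) (N : ℕ) :
    count p (N + a) = count p N + count p a := by
  simp [count_add', show ∀ k, p (k + a) = p k from hp]

theorem count_eq_add_sub_of_forall {t T : ℕ} (htT : t ≤ T) (h : ∀ k, t ≤ k → k < T → p k) :
    count p T = count p t + (T - t) := by
  obtain ⟨m, rfl⟩ := Nat.exists_eq_add_of_le htT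
  rw [count_add, count_of_forall (p := fun k => p (t + k)) fun k hk => h _ (by omega) (by omega)]
  omega

theorem count_eq_add_one_of_forall_not {t T : ℕ} (htT : t < T) (ht : p t)
    (h : ∀ k, t < k → k < T → ¬p k) : count p T = count p t + 1 := by
  obtain ⟨m, rfl⟩ : ∃ m, T = t + 1 + m := ⟨T - t - 1, by omega⟩
  rw [count_add, count_succ, if_pos ht,
    count_of_forall_not (p := fun k => p (t + 1 + k)) fun k hk => h _ (by omega) (by omega)]

end Nat

theorem countIn_eq_count (f : ℕ → ℕ) (N v : ℕ) : countIn f N v = count (fun k => f k = v) N := by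
  rw [count_eq_card_filter_range]
  rfl

/-- After its `t`-th firing the source sends the particle to the vertex of state `r t`, which
it has visited `count (fun k => r k = r t) t` times before. -/
def udHit (r : ℕ → ℕ) (t : ℕ) : Prop := r (count (fun k => r k = r t) t) ≠ r t

section UDCompressor

variable {r : ℕ → ℕ}

theorem count_and_udHit_eq (v N : ℕ) :
    count (fun t => r t = v ∧ udHit r t) N =
      count (fun k => r k ≠ v) (count (fun k => r k = v) N) := by
  rw [← count_and_comp_count]
  congr! 2 with t
  exact and_congr_right fun hv => by rw [udHit, hv]

section TwoState

variable (htwo : ∀ k, r k = 1 ∨ r k = 2)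
include htwo

theorem ne_one_iff_eq_two (k : ℕ) : r k ≠ 1 ↔ r k = 2 := by
  rcases htwo k with h | h <;> simp [h]

theorem ne_two_iff_eq_one (k : ℕ) : r k ≠ 2 ↔ r k = 1 := by
  rcases htwo k with h | h <;> simp [h]

theorem hitAt_true_false (t : ℕ) :
    hitAt true false r t = if udHit r t then some (r t + 3) else none := by
  rcases htwo t with h | h <;> rcases htwo (count (fun k => r k = r t) t) with h' | h' <;>
    simp_all [hitAt, udHit, countIn_eq_count]

theorem UDseq_count_udHit {t : ℕ} (ht : udHit r t) : UDseq r (count (udHit r) t) = r t + 3 := by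
  have hpred : (fun t => (hitAt true false r t).isSome = true) = udHit r := by
    funext t
    simp [hitAt_true_false htwo]
  simp only [UDseq, compSeq]
  rw [hpred, nth_count ht, hitAt_true_false htwo, if_pos ht]
  rfl

theorem exists_UDseq_zero (hex : ∃ t, r t ≠ r 0) : ∃ a, r a ≠ r 0 ∧ UDseq r 0 = r a + 3 := by
  set a := Nat.find hex
  have ha : r a ≠ r 0 := Nat.find_spec hex
  have hbefore : ∀ t < a, r t = r 0 := fun t ht => not_not.1 (Nat.find_min hex ht)
  have hquiet : ∀ t < a, ¬udHit r t := by
    intro t ht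
    rw [udHit, count_of_forall fun k hk => by rw [hbefore k (hk.trans ht), hbefore t ht]]
    exact not_not.2 rfl
  have hhit : udHit r a := by
    rw [udHit, count_of_forall_not fun k hk => by rw [hbefore k hk]; exact ha.symm]
    exact ha.symm
  refine ⟨a, ha, ?_⟩
  simpa [count_of_forall_not hquiet] using UDseq_count_udHit htwo hhit

theorem count_state_one_period {n : ℕ}
    (hbal : count (fun k => r k = 1) (2 * n) = count (fun k => r k = 2) (2 * n))
    {v : ℕ} (hv : v = 1 ∨ v = 2) : count (fun k => r k = v) (2 * n) = n := by
  have hsum := count_and_add_count_not_and (p := fun _ => True) (fun k => r k = 1) (2 * n)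
  simp only [and_true, count_true, ne_one_iff_eq_two htwo] at hsum
  rcases hv with rfl | rfl <;> omega

theorem count_state_two_periods {n : ℕ} (hper : Periodic r (2 * n))
    (hbal : count (fun k => r k = 1) (2 * n) = count (fun k => r k = 2) (2 * n))
    {v : ℕ} (hv : v = 1 ∨ v = 2) : count (fun k => r k = v) (2 * n + 2 * n) = 2 * n := by
  have hperv : Periodic (fun k => r k = v) (2 * n) := hper.comp (· = v)
  rw [count_add_of_periodic hperv, count_state_one_period htwo hbal hv]
  omega

theorem count_udHit_two_periods {n : ℕ} (hper : Periodic r (2 * n))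
    (hbal : count (fun k => r k = 1) (2 * n) = count (fun k => r k = 2) (2 * n)) :
    count (udHit r) (2 * n + 2 * n) = 2 * n := by
  rw [← count_and_add_count_not_and (fun k => r k = 1)]
  simp only [ne_one_iff_eq_two htwo]
  rw [count_and_udHit_eq, count_and_udHit_eq, count_state_two_periods htwo hper hbal (.inl rfl),
    count_state_two_periods htwo hper hbal (.inr rfl)]
  simp only [ne_one_iff_eq_two htwo, ne_two_iff_eq_one htwo]
  rw [count_state_one_period htwo hbal (.inl rfl), count_state_one_period htwo hbal (.inr rfl)]
  omega

theorem exists_UDseq_two_mul_sub_one {n : ℕ} (hn : 0 < n) (hper : Periodic r (2 * n))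
    (hbal : count (fun k => r k = 1) (2 * n) = count (fun k => r k = 2) (2 * n)) :
    ∃ b, r b ≠ r (2 * n - 1) ∧ UDseq r (2 * n - 1) = r b + 3 := by
  set T := 2 * n + 2 * n
  set s := r (2 * n - 1)
  obtain ⟨w, hw, hws⟩ : ∃ w, (w = 1 ∨ w = 2) ∧ w ≠ s := by
    rcases htwo (2 * n - 1) with h | h
    exacts [⟨2, .inr rfl, by omega⟩, ⟨1, .inl rfl, by omega⟩]
  obtain ⟨c, hc, hrc⟩ :=
    count_ne_iff_exists.1 (by rw [count_state_one_period htwo hbal hw]; omega)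
  set b := Nat.findGreatest (fun t => r t ≠ s) (T - 1)
  have hb : r b ≠ s :=
    Nat.findGreatest_spec (P := fun t => r t ≠ s) (by omega : c ≤ T - 1) (hrc ▸ hws)
  have hbT : b < T := (Nat.findGreatest_le _).trans_lt (by omega)
  have htail : ∀ t, b < t → t < T → r t = s :=
    fun t h1 h2 => not_not.1 (Nat.findGreatest_is_greatest h1 (by omega))
  have hquiet : ∀ t, b < t → t < T → ¬udHit r t := by
    intro t h1 h2
    have hcount := count_eq_add_sub_of_forall (p := fun k => r k = s) h2.le
      fun k hk1 hk2 => htail k (by omega) hk2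
    rw [count_state_two_periods htwo hper hbal (htwo _)] at hcount
    have hback : r (t - 2 * n) = s := by
      rw [← hper, Nat.sub_add_cancel (by omega)]
      exact htail t h1 h2
    rw [udHit, htail t h1 h2, show count (fun k => r k = s) t = t - 2 * n by omega]
    exact fun h => h hback
  have hhit : udHit r b := by
    have hcount := count_eq_add_one_of_forall_not (p := fun k => r k = r b) hbT rfl
      fun k h1 h2 => by rw [htail k h1 h2]; exact fun h => hb h.symm
    rw [count_state_two_periods htwo hper hbal (htwo b)] at hcount
    rw [udHit, show count (fun k => r k = r b) b = 2 * n - 1 by omega]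
    exact fun h => hb h.symm
  have hindex : count (udHit r) b = 2 * n - 1 := by
    have := count_eq_add_one_of_forall_not hbT hhit hquiet
    rw [count_udHit_two_periods htwo hper hbal] at this
    omega
  exact ⟨b, hb, hindex ▸ UDseq_count_udHit htwo hhit⟩

end TwoState

end UDCompressor

theorem statement15_general (r : ℕ → ℕ) (n : ℕ) (h2 : TwoState r)
    (hmin : IsMinimalPeriod r (2 * n))
    (hbal : countIn r (2 * n) 1 = countIn r (2 * n) 2)
    (hpal : Palindromic (UDseq r) (2 * n)) :
    r 0 = r (2 * n - 1) := by
  obtain ⟨htwo, ⟨k1, hk1⟩, ⟨k2, hk2⟩⟩ := h2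
  obtain ⟨hpos, hper, -⟩ := hmin
  rw [countIn_eq_count, countIn_eq_count] at hbal
  obtain ⟨a, ha, hfirst⟩ := exists_UDseq_zero htwo <| by
    rcases htwo 0 with h | h
    exacts [⟨k2, by omega⟩, ⟨k1, by omega⟩]
  obtain ⟨b, hb, hlast⟩ := exists_UDseq_two_mul_sub_one htwo (by omega) hper hbal
  have hab : r a = r b := by
    have := hpal 0 hpos
    rw [Nat.sub_zero, hfirst, hlast] at this
    omega
  rcases htwo 0 with h₀ | h₀ <;> rcases htwo a with hₐ | hₐ <;>
    rcases htwo (2 * n - 1) with hₛ | hₛ <;> omega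

/-- If `r` is a balanced two-state rotor type of period `2n` and
`UD(r)`, regarded as a periodic sequence of period length `2n`, is palindromic, then `r`
starts and ends with the same state: `r(1) = r(2n)` (0-based: `r 0 = r (2n-1)`). -/
theorem statement15 (r : ℕ → ℕ) (n : ℕ) (hn : 0 < n) (h2 : TwoState r)
    (hmin : IsMinimalPeriod r (2 * n))
    (hbal : countIn r (2 * n) 1 = countIn r (2 * n) 2)
    (hpal : Palindromic (UDseq r) (2 * n)) :
    r 0 = r (2 * n - 1) :=
  statement15_general r n h2 hmin hbal hpal
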